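/- arXiv:1303.6935 — 3 statements merged into one kernel-verified Lean document; each statement's English description precedes it below -/
import Mathlib

section
/- If B is a symmetric positive definite p×p matrix, s, t ∈ ℝ^p satisfy sᵀt > 0 and Bs ≠ 0 scaled appropriately (i.e., s ≠ 0), then the BFGS update B' = B − (B s sᵀ B)/(sᵀ B s) + (t tᵀ)/(tᵀ s) is symmetric positive definite. -/
/-!
Write `C = B - (B s)(B s)ᵀ / (sᵀ B s)`. For every `x`, `xᵀ C x = yᵀ B y` where
`y = x - (xᵀ B s / sᵀ B s) s` is the `B`-orthogonal projection of `x` off `s`; hence `C` is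
positive semidefinite and `xᵀ C x = 0` forces `x ∈ ℝ s`. The rank-one term `t tᵀ / (tᵀ s)` is
positive semidefinite, and on a nonzero `x = c s` it equals `c² (tᵀ s) > 0`.
-/

open Matrix

namespace Matrix

variable {n : Type*} [Fintype n]

theorem dotProduct_vecMulVec_mulVec {α : Type*} [CommSemiring α] (u v x : n → α) :
    x ⬝ᵥ (vecMulVec u v *ᵥ x) = (x ⬝ᵥ u) * (v ⬝ᵥ x) := by
  rw [vecMulVec_mulVec, op_smul_eq_smul, dotProduct_smul, smul_eq_mul, mul_comm]

theorem posSemidef_vecMulVec_self (v : n → ℝ) : (vecMulVec v v).PosSemidef := by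
  simpa using posSemidef_vecMulVec_self_star v

theorem PosSemidef.posDef_add_of_forall_pos {R : Type*} [Ring R] [PartialOrder R] [StarRing R]
    [AddLeftMono R] {C D : Matrix n n R} (hC : C.PosSemidef) (hD : D.PosSemidef)
    (h : ∀ x ≠ 0, star x ⬝ᵥ C *ᵥ x = 0 → 0 < star x ⬝ᵥ D *ᵥ x) : (C + D).PosDef := by
  refine .of_dotProduct_mulVec_pos (hC.isHermitian.add hD.isHermitian) fun x hx ↦ ?_
  rw [add_mulVec, dotProduct_add]
  obtain hCx | hCx := (hC.dotProduct_mulVec_nonneg x).eq_or_lt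
  · rw [← hCx, zero_add]
    exact h x hx hCx.symm
  · exact add_pos_of_pos_of_nonneg hCx (hD.dotProduct_mulVec_nonneg x)

theorem IsSymm.dotProduct_sub_vecMulVec_mulVec {α : Type*} [Field α] {B : Matrix n n α}
    (hB : B.IsSymm) (s x : n → α) :
    x ⬝ᵥ ((B - (s ⬝ᵥ B *ᵥ s)⁻¹ • vecMulVec (B *ᵥ s) (B *ᵥ s)) *ᵥ x) =
      (x - ((x ⬝ᵥ B *ᵥ s) / (s ⬝ᵥ B *ᵥ s)) • s) ⬝ᵥ
        B *ᵥ (x - ((x ⬝ᵥ B *ᵥ s) / (s ⬝ᵥ B *ᵥ s)) • s) := by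
  have hsym : s ⬝ᵥ B *ᵥ x = x ⬝ᵥ B *ᵥ s := by
    rw [← dotProduct_transpose_mulVec, hB.eq]
  by_cases ha : s ⬝ᵥ B *ᵥ s = 0
  -- both sides are `x ⬝ᵥ B *ᵥ x` here, because `0⁻¹ = 0` in a field
  · simp [ha]
  simp only [sub_mulVec, smul_mulVec, dotProduct_sub, dotProduct_smul, smul_eq_mul,
    dotProduct_vecMulVec_mulVec, mulVec_sub, mulVec_smul, sub_dotProduct, smul_dotProduct, hsym]
  rw [dotProduct_comm (B *ᵥ s) x]
  field_simp
  ring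

namespace PosDef

variable {B : Matrix n n ℝ}

theorem posSemidef_sub_vecMulVec (hB : B.PosDef) (s : n → ℝ) :
    (B - (s ⬝ᵥ B *ᵥ s)⁻¹ • vecMulVec (B *ᵥ s) (B *ᵥ s)).PosSemidef := by
  have hBs : 0 ≤ s ⬝ᵥ B *ᵥ s := by simpa using hB.posSemidef.dotProduct_mulVec_nonneg s
  refine .of_dotProduct_mulVec_nonneg ?_ fun x ↦ ?_
  · exact hB.isHermitian.sub ((posSemidef_vecMulVec_self _).smul (inv_nonneg.2 hBs)).isHermitian
  · rw [star_trivial, (isHermitian_iff_isSymm.1 hB.isHermitian).dotProduct_sub_vecMulVec_mulVec]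
    simpa only [star_trivial] using hB.posSemidef.dotProduct_mulVec_nonneg _

theorem exists_eq_smul_of_dotProduct_sub_vecMulVec_mulVec_eq_zero (hB : B.PosDef)
    {s x : n → ℝ} (hx : x ⬝ᵥ ((B - (s ⬝ᵥ B *ᵥ s)⁻¹ • vecMulVec (B *ᵥ s) (B *ᵥ s)) *ᵥ x) = 0) :
    ∃ c : ℝ, x = c • s := by
  rw [(isHermitian_iff_isSymm.1 hB.isHermitian).dotProduct_sub_vecMulVec_mulVec] at hx
  by_contra! hne
  exact (hB.dotProduct_mulVec_pos (sub_ne_zero.2 (hne _))).ne' (by simpa using hx)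

end PosDef

end Matrix

theorem bfgs_update_posDef_general {p : ℕ} (B : Matrix (Fin p) (Fin p) ℝ) (hB : B.PosDef)
    (s t : Fin p → ℝ) (hst : 0 < s ⬝ᵥ t) :
    (B - (s ⬝ᵥ (B *ᵥ s))⁻¹ • Matrix.vecMulVec (B *ᵥ s) (B *ᵥ s)
        + (t ⬝ᵥ s)⁻¹ • Matrix.vecMulVec t t).PosDef := by
  rw [dotProduct_comm t s]
  refine (hB.posSemidef_sub_vecMulVec s).posDef_add_of_forall_pos
    ((posSemidef_vecMulVec_self t).smul (inv_nonneg.2 hst.le)) fun x hx hx0 ↦ ?_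
  rw [star_trivial] at hx0 ⊢
  obtain ⟨c, rfl⟩ := hB.exists_eq_smul_of_dotProduct_sub_vecMulVec_mulVec_eq_zero hx0
  have hc : c ≠ 0 := by rintro rfl; simp at hx
  rw [smul_mulVec, dotProduct_smul, dotProduct_vecMulVec_mulVec, smul_dotProduct,
    dotProduct_smul, dotProduct_comm t s]
  simp only [smul_eq_mul]
  field_simp
  positivity

/-- The BFGS update of a symmetric positive definite matrix with a pair `(s,t)` satisfying
`sᵀt > 0` and `s ≠ 0` is symmetric positive definite. -/
theorem bfgs_update_posDef {p : ℕ} (B : Matrix (Fin p) (Fin p) ℝ) (hB : B.PosDef)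
    (s t : Fin p → ℝ) (hs : s ≠ 0) (hst : 0 < s ⬝ᵥ t) :
    (B - (s ⬝ᵥ (B *ᵥ s))⁻¹ • Matrix.vecMulVec (B *ᵥ s) (B *ᵥ s)
        + (t ⬝ᵥ s)⁻¹ • Matrix.vecMulVec t t).PosDef :=
  bfgs_update_posDef_general B hB s t hst
end

section
/- Let d minimize the model g(d) = ∇L(w)ᵀ d + (1/2) dᵀ B d + λ‖w + d‖₁ over ℝ^p, where B is symmetric positive definite. If d ≠ 0 then Δ := ∇L(w)ᵀ d + λ‖w + d‖₁ − λ‖w‖₁ satisfies Δ ≤ −dᵀ B d < 0 (the model direction is a descent direction for F). -/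
/-!
Write the model as `ψ(x) + Q(x)/2` with `ψ(x) = ∇Lᵀx + λ‖w + x‖₁` convex and `Q(x) = xᵀBx`
homogeneous of degree two. Comparing the minimizer `d` with `t • d`, which by convexity satisfies
`ψ(t • d) ≤ (1 - t) ψ(0) + t ψ(d)`, and dividing by `1 - t` gives
`ψ(d) - ψ(0) ≤ -(1 + t)/2 · Q(d)` for `t ∈ (0, 1)`; letting `t → 1` yields `Δ ≤ -Q(d)`,
and `Q(d) > 0` since `B` is positive definite and `d ≠ 0`.
-/

open Matrix Set Filter Topology

theorem ConvexOn.sub_le_neg_of_isMinOn_add_half {E : Type*} [AddCommGroup E] [Module ℝ E]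
    {ψ Q : E → ℝ} (hψ : ConvexOn ℝ univ ψ) (hQ : ∀ (t : ℝ) (x : E), Q (t • x) = t ^ 2 * Q x)
    {d : E} (hmin : IsMinOn (fun x => ψ x + Q x / 2) univ d) :
    ψ d - ψ 0 ≤ -Q d := by
  have bound : ∀ t ∈ Ioo (0 : ℝ) 1, ψ d - ψ 0 ≤ -((1 + t) / 2 * Q d) := by
    rintro t ⟨ht0, ht1⟩
    have h1t : 0 < 1 - t := by linarith
    have hconv : ψ (t • d) ≤ (1 - t) * ψ 0 + t * ψ d := by
      simpa using hψ.2 (mem_univ 0) (mem_univ d) h1t.le ht0.le (by ring)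
    have hle : ψ d + Q d / 2 ≤ ψ (t • d) + Q (t • d) / 2 := hmin (mem_univ _)
    rw [hQ] at hle
    rw [le_neg, ← mul_le_mul_iff_of_pos_left h1t]
    linarith
  have hlim : Tendsto (fun t : ℝ => -((1 + t) / 2 * Q d)) (𝓝[<] 1) (𝓝 (-Q d)) := by
    refine ((by fun_prop : Continuous fun t : ℝ => -((1 + t) / 2 * Q d)).tendsto' 1 _ ?_).mono_left
      nhdsWithin_le_nhds
    ring
  exact ge_of_tendsto hlim (eventually_of_mem (Ioo_mem_nhdsLT zero_lt_one) bound)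

theorem convexOn_univ_sum_abs {ι : Type*} [Fintype ι] :
    ConvexOn ℝ univ (fun x : ι → ℝ => ∑ j, |x j|) := by
  refine ⟨convex_univ, fun x _ y _ a b ha hb _ => ?_⟩
  simp only [smul_eq_mul, Finset.mul_sum, ← Finset.sum_add_distrib, Pi.add_apply, Pi.smul_apply]
  refine Finset.sum_le_sum fun j _ => (abs_add_le _ _).trans_eq ?_
  rw [abs_mul, abs_mul, abs_of_nonneg ha, abs_of_nonneg hb]

theorem dotProduct_mulVec_smul_smul {n : Type*} [Fintype n] (B : Matrix n n ℝ) (t : ℝ)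
    (x : n → ℝ) : (t • x) ⬝ᵥ (B *ᵥ (t • x)) = t ^ 2 * (x ⬝ᵥ (B *ᵥ x)) := by
  rw [mulVec_smul, smul_dotProduct, dotProduct_smul, smul_eq_mul, smul_eq_mul]
  ring

/-- If `d ≠ 0` minimizes the model `g(d) = ∇Lᵀd + (1/2)dᵀBd + λ‖w+d‖₁` with `B` symmetric
positive definite, then `Δ = ∇Lᵀd + λ‖w+d‖₁ - λ‖w‖₁ ≤ -dᵀBd < 0`. -/
theorem model_minimizer_descent {p : ℕ} (lam : ℝ) (hlam : 0 < lam)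
    (gl w : Fin p → ℝ) (B : Matrix (Fin p) (Fin p) ℝ) (hB : B.PosDef)
    (d : Fin p → ℝ)
    (hmin : ∀ d', gl ⬝ᵥ d + (1 / 2) * (d ⬝ᵥ (B *ᵥ d)) + lam * ∑ j, |w j + d j|
        ≤ gl ⬝ᵥ d' + (1 / 2) * (d' ⬝ᵥ (B *ᵥ d')) + lam * ∑ j, |w j + d' j|)
    (hd : d ≠ 0) :
    gl ⬝ᵥ d + lam * ∑ j, |w j + d j| - lam * ∑ j, |w j| ≤ -(d ⬝ᵥ (B *ᵥ d)) ∧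
      -(d ⬝ᵥ (B *ᵥ d)) < 0 := by
  have hψ : ConvexOn ℝ univ (fun x => gl ⬝ᵥ x + lam * ∑ j, |w j + x j|) :=
    ((dotProductBilin ℝ ℝ gl).convexOn convex_univ).add
      ((convexOn_univ_sum_abs.translate_right w).smul hlam.le)
  have hdesc := hψ.sub_le_neg_of_isMinOn_add_half (Q := fun x => x ⬝ᵥ (B *ᵥ x))
    (dotProduct_mulVec_smul_smul B) (d := d) <|
    isMinOn_univ_iff.2 fun d' => by linarith [hmin d']
  exact ⟨by simpa using hdesc, neg_neg_of_pos (hB.dotProduct_mulVec_pos hd)⟩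
end

section
/- Armijo line search terminates: if L has a Lipschitz continuous gradient with constant M, d ≠ 0 satisfies Δ = ∇L(w)ᵀd + λ‖w+d‖₁ − λ‖w‖₁ < 0, and 0 < σ < 1, then for all sufficiently small α ∈ (0,1], F(w + αd) ≤ F(w) + σαΔ, where F(w) = λ‖w‖₁ + L(w). -/
/-!
Convexity of the `ℓ¹` norm bounds the nonsmooth part of `F(w + αd)` by
`(1 - α) λ‖w‖₁ + α λ‖w + d‖₁`, and the Lipschitz gradient bounds the smooth part by the
first-order Taylor polynomial plus `M α² ‖d‖²`. Together,
`F(w + αd) ≤ F(w) + αΔ + M ‖d‖² α²`, and the quadratic term is absorbed into `(1 - σ) α (-Δ)`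
once `α` is small.
-/

open InnerProductSpace Metric

lemma sum_abs_add_mul_le {ι : Type*} [Fintype ι] (x y : ι → ℝ) {α : ℝ}
    (hα0 : 0 ≤ α) (hα1 : α ≤ 1) :
    ∑ j, |x j + α * y j| ≤ (1 - α) * ∑ j, |x j| + α * ∑ j, |x j + y j| := by
  rw [Finset.mul_sum, Finset.mul_sum, ← Finset.sum_add_distrib]
  refine Finset.sum_le_sum fun j _ => ?_
  calc |x j + α * y j| = |(1 - α) * x j + α * (x j + y j)| := by ring_nf
    _ ≤ |(1 - α) * x j| + |α * (x j + y j)| := abs_add_le _ _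
    _ = (1 - α) * |x j| + α * |x j + y j| := by
      rw [abs_mul, abs_mul, abs_of_nonneg (sub_nonneg.2 hα1), abs_of_nonneg hα0]

/-- The descent lemma, with the constant `M` instead of the sharp `M / 2`. -/
lemma le_add_inner_add_mul_sq_of_gradient_lipschitz {E : Type*} [NormedAddCommGroup E]
    [InnerProductSpace ℝ E] [CompleteSpace E] {L : E → ℝ} {g : E → E} {M : ℝ}
    (hg : ∀ x, HasGradientAt L (g x) x) (hLip : ∀ x y, ‖g x - g y‖ ≤ M * ‖x - y‖)
    (x h : E) :
    L (x + h) ≤ L x + ⟪g x, h⟫_ℝ + M * ‖h‖ ^ 2 := by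
  rcases eq_or_ne h 0 with rfl | hh
  · simp
  have hM : 0 ≤ M := by
    have := (norm_nonneg _).trans (hLip (x + h) x)
    rw [add_sub_cancel_left] at this
    exact nonneg_of_mul_nonneg_left this (norm_pos_iff.2 hh)
  -- Mean value inequality for `y ↦ L y - ⟪g x, y⟫`, whose derivative at `y` is `⟪g y - g x, ·⟫`.
  have hderiv : ∀ y ∈ closedBall x ‖h‖, HasFDerivWithinAt (fun y => L y - ⟪g x, y⟫_ℝ)
      (innerSL ℝ (g y - g x)) (closedBall x ‖h‖) y := by
    intro y _
    have : HasFDerivAt (fun y => L y - ⟪g x, y⟫_ℝ) (toDual ℝ E (g y) - innerSL ℝ (g x)) y :=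
      (hg y).hasFDerivAt.sub (innerSL ℝ (g x)).hasFDerivAt
    refine this.hasFDerivWithinAt.congr_fderiv ?_
    ext v
    simp
  have hbound : ∀ y ∈ closedBall x ‖h‖, ‖innerSL ℝ (g y - g x)‖ ≤ M * ‖h‖ := by
    intro y hy
    rw [innerSL_apply_norm]
    exact (hLip y x).trans (mul_le_mul_of_nonneg_left (mem_closedBall_iff_norm.1 hy) hM)
  have key := (convex_closedBall x ‖h‖).norm_image_sub_le_of_norm_hasFDerivWithin_le hderiv
    hbound (mem_closedBall_self (norm_nonneg h)) (y := x + h) (by simp [dist_eq_norm])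
  rw [add_sub_cancel_left, inner_add_right, Real.norm_eq_abs] at key
  nlinarith [le_abs_self (L (x + h) - (⟪g x, x⟫_ℝ + ⟪g x, h⟫_ℝ) - (L x - ⟪g x, x⟫_ℝ))]

lemma exists_pos_forall_mul_add_mul_sq_le {Δ σ : ℝ} (hΔ : Δ < 0) (hσ : σ < 1) (C : ℝ) :
    ∃ α₀ > (0 : ℝ), ∀ α : ℝ, 0 < α → α ≤ α₀ → α * Δ + C * α ^ 2 ≤ σ * α * Δ := by
  have hden : 0 < |C| + 1 := by positivity
  refine ⟨(1 - σ) * -Δ / (|C| + 1), div_pos (mul_pos (sub_pos.2 hσ) (neg_pos.2 hΔ)) hden,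
    fun α hα hαle => ?_⟩
  have hstep : α * (|C| + 1) ≤ (1 - σ) * -Δ := (le_div_iff₀ hden).1 hαle
  calc α * Δ + C * α ^ 2 ≤ α * Δ + α * (α * (|C| + 1)) := by
        nlinarith [le_abs_self C, sq_nonneg α]
    _ ≤ α * Δ + α * ((1 - σ) * -Δ) := by gcongr
    _ = σ * α * Δ := by ring

theorem armijo_line_search_terminates_general {p : ℕ} (lam M σ : ℝ)
    (hlam : 0 < lam) (hσ1 : σ < 1)
    (L : EuclideanSpace ℝ (Fin p) → ℝ)
    (g : EuclideanSpace ℝ (Fin p) → EuclideanSpace ℝ (Fin p))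
    (hg : ∀ x, HasGradientAt L (g x) x)
    (hLip : ∀ x y, ‖g x - g y‖ ≤ M * ‖x - y‖)
    (w d : EuclideanSpace ℝ (Fin p)) (Δ : ℝ)
    (hΔdef : Δ = (inner ℝ (g w) d : ℝ) + lam * ∑ j, |w j + d j| - lam * ∑ j, |w j|)
    (hΔ : Δ < 0) :
    ∃ α₀ > (0 : ℝ), ∀ α : ℝ, 0 < α → α ≤ α₀ → α ≤ 1 →
      lam * ∑ j, |w j + α * d j| + L (w + α • d)
        ≤ lam * ∑ j, |w j| + L w + σ * α * Δ := by
  obtain ⟨α₀, hα₀, hsmall⟩ := exists_pos_forall_mul_add_mul_sq_le hΔ hσ1 (M * ‖d‖ ^ 2)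
  refine ⟨α₀, hα₀, fun α hα hαle hα1 => ?_⟩
  have hl1 := mul_le_mul_of_nonneg_left (sum_abs_add_mul_le (⇑w) (⇑d) hα.le hα1) hlam.le
  have hsmooth := le_add_inner_add_mul_sq_of_gradient_lipschitz hg hLip w (α • d)
  rw [inner_smul_right, norm_smul, Real.norm_of_nonneg hα.le] at hsmooth
  calc lam * ∑ j, |w j + α * d j| + L (w + α • d)
      ≤ lam * ∑ j, |w j| + L w + (α * Δ + M * ‖d‖ ^ 2 * α ^ 2) := by
        rw [hΔdef]; linarith
    _ ≤ lam * ∑ j, |w j| + L w + σ * α * Δ := by linarith [hsmall α hα hαle]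

/-- Armijo line search terminates: if `∇L` is `M`-Lipschitz, `d ≠ 0` with
`Δ = ∇L(w)ᵀd + λ‖w+d‖₁ - λ‖w‖₁ < 0` and `0 < σ < 1`, then for all sufficiently small
`α ∈ (0,1]`, `F(w + αd) ≤ F(w) + σαΔ`. -/
theorem armijo_line_search_terminates {p : ℕ} (lam M σ : ℝ)
    (hlam : 0 < lam) (hσ0 : 0 < σ) (hσ1 : σ < 1)
    (L : EuclideanSpace ℝ (Fin p) → ℝ)
    (g : EuclideanSpace ℝ (Fin p) → EuclideanSpace ℝ (Fin p))
    (hg : ∀ x, HasGradientAt L (g x) x)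
    (hLip : ∀ x y, ‖g x - g y‖ ≤ M * ‖x - y‖)
    (w d : EuclideanSpace ℝ (Fin p)) (hd : d ≠ 0) (Δ : ℝ)
    (hΔdef : Δ = (inner ℝ (g w) d : ℝ) + lam * ∑ j, |w j + d j| - lam * ∑ j, |w j|)
    (hΔ : Δ < 0) :
    ∃ α₀ > (0 : ℝ), ∀ α : ℝ, 0 < α → α ≤ α₀ → α ≤ 1 →
      lam * ∑ j, |w j + α * d j| + L (w + α • d)
        ≤ lam * ∑ j, |w j| + L w + σ * α * Δ :=
  armijo_line_search_terminates_general lam M σ hlam hσ1 L g hg hLip w d Δ hΔdef hΔ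
end
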